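/- arXiv:2508.17217 — 3 statements merged into one kernel-verified Lean document; each statement's English description precedes it below -/
import Mathlib

section
/- Fix 0 < β < 1/5, a constant A1 > 0, and functions A2, A3 : (0,∞) → (0,∞). Then there exist a constant C > 0 and a threshold x0 such that for all x ≥ x0, every nonnegative multiplicative f in M(β) relative to x, every δ with 3/4 < δ ≤ 1, and every integer k ≥ 1: ∑_{n ≤ x, gcd(n,k)=1, n J-rough} f(n)/n^δ ≤ C · exp(∑_{J < p ≤ x prime, p ∤ k} f(p)/p^δ), where J = (log log x)^{1−β}. -/
/-!
Put `g n = f n / n ^ δ`, again nonnegative multiplicative. Every `n` in the sum has all its prime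
factors in the set `P` of primes `J < p ≤ x` with `p ∤ k`, so the sum is at most the truncated
Euler product `∏_{p ∈ P} ∑_l g (p ^ l)`. For `p > J = (log log x) ^ (1 - β)` condition 1 gives
`g (p ^ l) ≤ r ^ l` with `r = A1 (log log x) ^ β / p ^ δ ≤ A1 / p ^ σ`, `σ = 3/4 - β / (1 - β) > 1/2`.
For large `x` this forces `r ≤ 1/2`, so each local factor is at most
`1 + g p + 2 r ^ 2 ≤ exp (g p + 2 A1 ^ 2 / p ^ (2σ))`, and `∑_p p ^ (-2σ) ≤ ζ(2σ) < ∞` because `2σ > 1`.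
-/

open Finset

noncomputable section

/-- A nonnegative multiplicative function: `f ≥ 0`, `f 1 = 1`, and
`f (m n) = f m * f n` whenever `gcd (m, n) = 1`. -/
def MultNonneg (f : ℕ → ℝ) : Prop :=
  (∀ n, 0 ≤ f n) ∧ f 1 = 1 ∧ ∀ m n : ℕ, Nat.Coprime m n → f (m * n) = f m * f n

/-- The class `M(β)` relative to `x`:
(Condition 1) `f (p^l) ≤ A1^l * (log log x)^(β l)` for all primes `p` and `l ≥ 1`;
(Condition 2) `f n ≤ max (A2 ε * x^ε) (A3 ε * (log x)^ε)` for every `ε > 0`, `n ≥ 1`. -/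
def InMβ (f : ℕ → ℝ) (x β A1 : ℝ) (A2 A3 : ℝ → ℝ) : Prop :=
  (∀ p : ℕ, p.Prime → ∀ l : ℕ, 1 ≤ l →
      f (p ^ l) ≤ A1 ^ l * Real.log (Real.log x) ^ (β * (l : ℝ))) ∧
  (∀ ε : ℝ, 0 < ε → ∀ n : ℕ, 1 ≤ n →
      f n ≤ max (A2 ε * x ^ ε) (A3 ε * Real.log x ^ ε))

/-- `n` is `J`-smooth: every prime factor of `n` is at most `J`. -/
def JSmooth (J : ℝ) (n : ℕ) : Prop := ∀ p ∈ n.primeFactors, (p : ℝ) ≤ J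

/-- `n` is `J`-rough: every prime factor of `n` exceeds `J`. -/
def JRough (J : ℝ) (n : ℕ) : Prop := ∀ p ∈ n.primeFactors, J < (p : ℝ)

instance (J : ℝ) : DecidablePred (JSmooth J) := fun n =>
  inferInstanceAs (Decidable (∀ p ∈ n.primeFactors, (p : ℝ) ≤ J))

instance (J : ℝ) : DecidablePred (JRough J) := fun n =>
  inferInstanceAs (Decidable (∀ p ∈ n.primeFactors, J < (p : ℝ)))

/-- The roughness/smoothness cutoff `J = (log log x)^(1-β)`. -/
def Jval (x β : ℝ) : ℝ := Real.log (Real.log x) ^ (1 - β)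

namespace MultNonneg

variable {f : ℕ → ℝ}

theorem div_rpow (hf : MultNonneg f) (δ : ℝ) : MultNonneg (fun n => f n / (n : ℝ) ^ δ) := by
  obtain ⟨hf0, hf1, hmul⟩ := hf
  refine ⟨fun n => by have := hf0 n; positivity, by simp [hf1], fun m n hmn => ?_⟩
  show f (m * n) / _ = f m / _ * (f n / _)
  rw [hmul m n hmn, Nat.cast_mul, Real.mul_rpow m.cast_nonneg n.cast_nonneg, mul_div_mul_comm]

theorem apply_eq_mul_ordCompl (hf : MultNonneg f) {p n : ℕ} (hp : p.Prime) (hn : n ≠ 0) :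
    f n = f (p ^ n.factorization p) * f (ordCompl[p] n) := by
  rw [← hf.2.2 _ _ ((Nat.coprime_ordCompl hp hn).pow_left _), Nat.ordProj_mul_ordCompl_eq_self]

theorem sum_le_prod_sum_prime_pow (hf : MultNonneg f) (N : ℕ) {P : Finset ℕ}
    (hP : ∀ p ∈ P, p.Prime) {S : Finset ℕ}
    (hS : ∀ n ∈ S, n ≠ 0 ∧ n.primeFactors ⊆ P ∧ ∀ q, n.factorization q < N) :
    ∑ n ∈ S, f n ≤ ∏ p ∈ P, ∑ l ∈ range N, f (p ^ l) := by
  induction P using Finset.induction_on generalizing S with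
  | empty =>
    have hS1 : S ⊆ {1} := fun n hn => by
      obtain ⟨hn0, hnP, -⟩ := hS n hn
      rw [subset_empty, Nat.primeFactors_eq_empty] at hnP
      simpa [hn0] using hnP
    calc ∑ n ∈ S, f n ≤ ∑ n ∈ {1}, f n :=
          sum_le_sum_of_subset_of_nonneg hS1 fun n _ _ => hf.1 n
      _ = _ := by simp [hf.2.1]
  | @insert p P hpP ih =>
    have hp := hP p (mem_insert_self p P)
    set S' := S.image (fun n => ordCompl[p] n)
    have hS' : ∀ m ∈ S', m ≠ 0 ∧ m.primeFactors ⊆ P ∧ ∀ q, m.factorization q < N := by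
      simp only [S', mem_image, forall_exists_index, and_imp]
      rintro _ n hn rfl
      obtain ⟨hn0, hnP, hnN⟩ := hS n hn
      refine ⟨(Nat.ordCompl_pos p hn0).ne', ?_, fun q => ?_⟩
      · rw [← Nat.support_factorization, Nat.factorization_ordCompl, Finsupp.support_erase,
          Nat.support_factorization]
        exact subset_insert_iff.mp hnP
      · exact ((Nat.factorization_le_iff_dvd (Nat.ordCompl_pos p hn0).ne' hn0).mpr
          (Nat.ordCompl_dvd n p) q).trans_lt (hnN q)
    have hinj : Set.InjOn (fun n => (n.factorization p, ordCompl[p] n)) S := by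
      intro n _ m _ h
      simp only [Prod.mk.injEq] at h
      rw [← Nat.ordProj_mul_ordCompl_eq_self n p, ← Nat.ordProj_mul_ordCompl_eq_self m p, h.2, h.1]
    have hmaps : S.image (fun n => (n.factorization p, ordCompl[p] n)) ⊆ range N ×ˢ S' := by
      simp only [subset_iff, mem_image, mem_product, mem_range, S']
      rintro _ ⟨n, hn, rfl⟩
      exact ⟨(hS n hn).2.2 p, n, hn, rfl⟩
    calc ∑ n ∈ S, f n = ∑ n ∈ S, f (p ^ n.factorization p) * f (ordCompl[p] n) :=
          sum_congr rfl fun n hn => hf.apply_eq_mul_ordCompl hp (hS n hn).1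
      _ = ∑ vm ∈ S.image (fun n => (n.factorization p, ordCompl[p] n)), f (p ^ vm.1) * f vm.2 :=
          (sum_image (f := fun vm => f (p ^ vm.1) * f vm.2) hinj).symm
      _ ≤ ∑ vm ∈ range N ×ˢ S', f (p ^ vm.1) * f vm.2 :=
          sum_le_sum_of_subset_of_nonneg hmaps fun _ _ _ => mul_nonneg (hf.1 _) (hf.1 _)
      _ = (∑ l ∈ range N, f (p ^ l)) * ∑ m ∈ S', f m := by rw [sum_product, sum_mul_sum]
      _ ≤ ∏ q ∈ insert p P, ∑ l ∈ range N, f (q ^ l) := by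
        rw [prod_insert hpP]
        exact mul_le_mul_of_nonneg_left (ih (fun q hq => hP q (mem_insert_of_mem hq)) hS')
          (sum_nonneg fun _ _ => hf.1 _)

end MultNonneg

open Real

theorem one_half_lt_three_quarters_sub_div {β : ℝ} (hβ : β < 1 / 5) :
    1 / 2 < 3 / 4 - β / (1 - β) := by
  have : β / (1 - β) < 1 / 4 := by rw [div_lt_iff₀ (by linarith)]; linarith
  linarith

theorem sum_range_add_two_le_exp {a : ℕ → ℝ} {r : ℝ} (ha0 : a 0 = 1) (hr0 : 0 ≤ r)
    (hr : r ≤ 1 / 2) (ha : ∀ l, 2 ≤ l → a l ≤ r ^ l) (N : ℕ) :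
    ∑ l ∈ range (N + 2), a l ≤ exp (a 1 + 2 * r ^ 2) := by
  have htail : ∑ l ∈ Ico 2 (N + 2), a l ≤ 2 * r ^ 2 := calc
    _ ≤ ∑ l ∈ Ico 2 (N + 2), r ^ l := sum_le_sum fun l hl => ha l (mem_Ico.mp hl).1
    _ ≤ r ^ 2 / (1 - r) := geom_sum_Ico_le_of_lt_one hr0 (by linarith)
    _ ≤ 2 * r ^ 2 := by rw [div_le_iff₀ (by linarith)]; nlinarith [sq_nonneg r]
  rw [range_eq_Ico, sum_eq_sum_Ico_succ_bot (by omega), sum_eq_sum_Ico_succ_bot (by omega), ha0]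
  linarith [add_one_le_exp (a 1 + 2 * r ^ 2)]

theorem rpow_div_rpow_le_one_div_rpow {L p β μ δ : ℝ} (hL : 0 ≤ L) (hβ0 : 0 ≤ β) (hβ1 : β < 1)
    (hp : 1 ≤ p) (hLp : L ^ (1 - β) ≤ p) (hδ : μ ≤ δ) :
    L ^ β / p ^ δ ≤ 1 / p ^ (μ - β / (1 - β)) := by
  have hp0 : 0 < p := one_pos.trans_le hp
  have hLβ : L ^ β ≤ p ^ (β / (1 - β)) := calc
    L ^ β = (L ^ (1 - β)) ^ (β / (1 - β)) := by
      rw [← rpow_mul hL, mul_div_cancel₀ _ (by linarith)]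
    _ ≤ p ^ (β / (1 - β)) :=
      rpow_le_rpow (rpow_nonneg hL _) hLp (div_nonneg hβ0 (by linarith))
  rw [rpow_sub hp0, one_div_div]
  exact div_le_div₀ (rpow_nonneg hp0.le _) hLβ (rpow_pos_of_pos hp0 _)
    (rpow_le_rpow_of_exponent_le hp hδ)

theorem div_rpow_pow_le_of_le_pow {f : ℕ → ℝ} {p l : ℕ} {c δ : ℝ} (hfp : f (p ^ l) ≤ c ^ l) :
    f (p ^ l) / ((p ^ l : ℕ) : ℝ) ^ δ ≤ (c / (p : ℝ) ^ δ) ^ l := by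
  rw [div_pow, Nat.cast_pow, ← rpow_pow_comm p.cast_nonneg]
  exact div_le_div_of_nonneg_right hfp (pow_nonneg (rpow_nonneg p.cast_nonneg _) _)

theorem sum_range_prime_pow_div_rpow_le_exp {f : ℕ → ℝ} (hf : MultNonneg f) {A1 L β δ : ℝ}
    (hA1 : 0 ≤ A1) (hL : 0 ≤ L) (hβ0 : 0 ≤ β) (hβ1 : β < 1) (hδ : 3 / 4 ≤ δ) {p : ℕ}
    (hp : p.Prime) (hLp : L ^ (1 - β) ≤ p) (hA1p : 2 * A1 ≤ (p : ℝ) ^ (3 / 4 - β / (1 - β)))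
    (hfp : ∀ l : ℕ, 1 ≤ l → f (p ^ l) ≤ A1 ^ l * L ^ (β * (l : ℝ))) (N : ℕ) :
    ∑ l ∈ range (N + 2), f (p ^ l) / ((p ^ l : ℕ) : ℝ) ^ δ
      ≤ exp (f p / (p : ℝ) ^ δ + 2 * A1 ^ 2 * (1 / (p : ℝ) ^ (2 * (3 / 4 - β / (1 - β))))) := by
  set σ := 3 / 4 - β / (1 - β)
  have hp1 : (1 : ℝ) ≤ p := by exact_mod_cast hp.one_lt.le
  have hpσ : 0 < (p : ℝ) ^ σ := rpow_pos_of_pos (one_pos.trans_le hp1) σ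
  set r := A1 * L ^ β / (p : ℝ) ^ δ
  have hr0 : 0 ≤ r := by positivity
  have hrσ : r ≤ A1 / (p : ℝ) ^ σ := by
    rw [show r = A1 * (L ^ β / (p : ℝ) ^ δ) from mul_div_assoc .., div_eq_mul_one_div A1]
    exact mul_le_mul_of_nonneg_left (rpow_div_rpow_le_one_div_rpow hL hβ0 hβ1 hp1 hLp hδ) hA1
  have hr : r ≤ 1 / 2 := hrσ.trans (by rw [div_le_iff₀ hpσ]; linarith)
  have hr2 : r ^ 2 ≤ A1 ^ 2 * (1 / (p : ℝ) ^ (2 * σ)) := calc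
    r ^ 2 ≤ (A1 / (p : ℝ) ^ σ) ^ 2 := pow_le_pow_left₀ hr0 hrσ 2
    _ = A1 ^ 2 * (1 / (p : ℝ) ^ (2 * σ)) := by
      rw [div_pow, mul_comm 2 σ, rpow_mul (by positivity), rpow_two, mul_one_div]
  have hpow : ∀ l, 1 ≤ l → f (p ^ l) ≤ (A1 * L ^ β) ^ l := fun l hl => by
    rw [mul_pow, ← rpow_mul_natCast hL]; exact hfp l hl
  calc ∑ l ∈ range (N + 2), f (p ^ l) / ((p ^ l : ℕ) : ℝ) ^ δ
      ≤ exp (f (p ^ 1) / ((p ^ 1 : ℕ) : ℝ) ^ δ + 2 * r ^ 2) :=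
        sum_range_add_two_le_exp (by simp [hf.2.1]) hr0 hr
          (fun l hl => div_rpow_pow_le_of_le_pow (hpow l (by omega))) N
    _ ≤ _ := by rw [pow_one, mul_assoc]; gcongr

theorem primeFactors_subset_filter_prime {n N k : ℕ} {J : ℝ} (hn : n ∈ Icc 1 N)
    (hnk : n.Coprime k) (hJ : JRough J n) :
    n.primeFactors ⊆ (Icc 1 N).filter (fun p : ℕ => p.Prime ∧ J < (p : ℝ) ∧ ¬ p ∣ k) := by
  intro q hq
  have hqp := Nat.prime_of_mem_primeFactors hq
  have hqn := Nat.dvd_of_mem_primeFactors hq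
  rw [mem_Icc] at hn
  simp only [mem_filter, mem_Icc]
  exact ⟨⟨hqp.one_lt.le, (Nat.le_of_dvd hn.1 hqn).trans hn.2⟩, hqp, hJ q hq,
    hqp.coprime_iff_not_dvd.mp (Nat.Coprime.coprime_dvd_left hqn hnk)⟩

theorem sum_coprime_rough_le_mul_exp {f : ℕ → ℝ} (hf : MultNonneg f) {A1 L β δ : ℝ}
    (hA1 : 0 ≤ A1) (hL : 0 ≤ L) (hβ0 : 0 ≤ β) (hβ : β < 1 / 5) (hδ : 3 / 4 ≤ δ)
    (hJ : 2 * A1 ≤ (L ^ (1 - β)) ^ (3 / 4 - β / (1 - β)))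
    (hf1 : ∀ p : ℕ, p.Prime → ∀ l : ℕ, 1 ≤ l → f (p ^ l) ≤ A1 ^ l * L ^ (β * (l : ℝ)))
    (N k : ℕ) :
    ∑ n ∈ (Icc 1 N).filter (fun n => n.Coprime k ∧ JRough (L ^ (1 - β)) n), f n / (n : ℝ) ^ δ
      ≤ exp (2 * A1 ^ 2 * ∑' n : ℕ, 1 / (n : ℝ) ^ (2 * (3 / 4 - β / (1 - β)))) *
        exp (∑ p ∈ (Icc 1 N).filter (fun p : ℕ => p.Prime ∧ L ^ (1 - β) < (p : ℝ) ∧ ¬ p ∣ k),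
          f p / (p : ℝ) ^ δ) := by
  have hβ1 : β < 1 := by linarith
  have hσ : 1 < 2 * (3 / 4 - β / (1 - β)) := by linarith [one_half_lt_three_quarters_sub_div hβ]
  set σ := 3 / 4 - β / (1 - β)
  set P := (Icc 1 N).filter (fun p : ℕ => p.Prime ∧ L ^ (1 - β) < (p : ℝ) ∧ ¬ p ∣ k)
  have hS : ∀ n ∈ (Icc 1 N).filter (fun n => n.Coprime k ∧ JRough (L ^ (1 - β)) n),
      n ≠ 0 ∧ n.primeFactors ⊆ P ∧ ∀ q, n.factorization q < N + 2 := by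
    intro n hn
    obtain ⟨hnN, hnk, hnJ⟩ := mem_filter.mp hn
    have hn0 : n ≠ 0 := by rw [mem_Icc] at hnN; omega
    refine ⟨hn0, primeFactors_subset_filter_prime hnN hnk hnJ, fun q => ?_⟩
    have := Nat.factorization_lt q hn0
    rw [mem_Icc] at hnN
    omega
  have hfactor : ∀ p ∈ P, ∑ l ∈ range (N + 2), f (p ^ l) / ((p ^ l : ℕ) : ℝ) ^ δ
      ≤ exp (f p / (p : ℝ) ^ δ + 2 * A1 ^ 2 * (1 / (p : ℝ) ^ (2 * σ))) := by
    intro p hp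
    obtain ⟨-, hp, hJp, -⟩ := mem_filter.mp hp
    exact sum_range_prime_pow_div_rpow_le_exp hf hA1 hL hβ0 hβ1 hδ hp hJp.le
      (hJ.trans (rpow_le_rpow (rpow_nonneg hL _) hJp.le (by linarith))) (hf1 p hp) N
  have hzeta : ∑ p ∈ P, 1 / (p : ℝ) ^ (2 * σ) ≤ ∑' n : ℕ, 1 / (n : ℝ) ^ (2 * σ) :=
    (summable_one_div_nat_rpow.mpr hσ).sum_le_tsum P fun _ _ => by positivity
  calc _ ≤ ∏ p ∈ P, ∑ l ∈ range (N + 2), f (p ^ l) / ((p ^ l : ℕ) : ℝ) ^ δ :=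
        (hf.div_rpow δ).sum_le_prod_sum_prime_pow (N + 2) (fun p hp => (mem_filter.mp hp).2.1) hS
    _ ≤ ∏ p ∈ P, exp (f p / (p : ℝ) ^ δ + 2 * A1 ^ 2 * (1 / (p : ℝ) ^ (2 * σ))) :=
        prod_le_prod (fun p _ => sum_nonneg fun l _ => (hf.div_rpow δ).1 _) hfactor
    _ = exp (∑ p ∈ P, f p / (p : ℝ) ^ δ + 2 * A1 ^ 2 * ∑ p ∈ P, 1 / (p : ℝ) ^ (2 * σ)) := by
        rw [← exp_sum, sum_add_distrib, mul_sum]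
    _ ≤ _ := by rw [← exp_add, add_comm]; gcongr

/-- The Euler-product bound (7.4): `∑_{n ≤ x, (n,k)=1, n J-rough} f(n)/n^δ ≤
C · exp(∑_{J < p ≤ x, p ∤ k} f(p)/p^δ)` for `f ∈ M(β)` and `3/4 < δ ≤ 1`. -/
theorem rough_euler_bound (β : ℝ) (hβ : 0 < β) (hβ' : β < 1/5)
    (A1 : ℝ) (hA1 : 0 < A1) (A2 A3 : ℝ → ℝ) :
    ∃ C : ℝ, 0 < C ∧ ∃ x0 : ℝ, ∀ x : ℝ, x0 ≤ x →
      ∀ f : ℕ → ℝ, MultNonneg f → InMβ f x β A1 A2 A3 →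
      ∀ δ : ℝ, 3/4 < δ → δ ≤ 1 →
      ∀ k : ℕ, 1 ≤ k →
      ∑ n ∈ (Finset.Icc 1 ⌊x⌋₊).filter
          (fun n : ℕ => Nat.Coprime n k ∧ JRough (Jval x β) n),
          f n / (n : ℝ) ^ δ
        ≤ C * Real.exp (∑ p ∈ (Finset.Icc 1 ⌊x⌋₊).filter
            (fun p : ℕ => p.Prime ∧ Jval x β < (p : ℝ) ∧ ¬ p ∣ k),
            f p / (p : ℝ) ^ δ) := by
  have hσ : 0 < 3 / 4 - β / (1 - β) := by linarith [one_half_lt_three_quarters_sub_div hβ']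
  have hloglog := tendsto_log_atTop.comp tendsto_log_atTop
  have hlarge : ∀ᶠ x in Filter.atTop,
      0 ≤ log (log x) ∧ 2 * A1 ≤ (Jval x β) ^ (3 / 4 - β / (1 - β)) :=
    (hloglog.eventually_ge_atTop 0).and <| ((tendsto_rpow_atTop hσ).comp
      ((tendsto_rpow_atTop (by linarith)).comp hloglog)).eventually_ge_atTop _
  obtain ⟨x0, hx0⟩ := Filter.eventually_atTop.mp hlarge
  refine ⟨exp (2 * A1 ^ 2 * ∑' n : ℕ, 1 / (n : ℝ) ^ (2 * (3 / 4 - β / (1 - β)))), exp_pos _, x0,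
    fun x hx f hf hfM δ hδ _ k _ => ?_⟩
  exact sum_coprime_rough_le_mul_exp hf hA1.le (hx0 x hx).1 hβ.le hβ' hδ.le (hx0 x hx).2
    hfM.1 ⌊x⌋₊ k
end
end

section
/- Fix 0 < α < 1/2 and 0 < κ < 1/2. There exist a constant C > 0 and a threshold x0 such that for all x ≥ x0 and all real z with x^{ακ/25} ≤ z ≤ x: ∑ 1/c, taken over all integers c with z^{1/2} < c ≤ z whose largest prime factor satisfies p(c) ≤ (log x · log log x)^5, is at most C · x^{−ακ/300}. -/
open Finset Real

noncomputable section


lemma aux_inv_le_exp {u : ℝ} (h0 : 0 ≤ u) (h1 : u ≤ 3/4) :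
    (1 - u)⁻¹ ≤ Real.exp (4 * u) := by
  have hpos : (0:ℝ) < 1 - u := by linarith
  rw [inv_eq_one_div, div_le_iff₀ hpos]
  have h2 : 1 + 4*u ≤ Real.exp (4*u) := by
    have := Real.add_one_le_exp (4*u); linarith
  have h3 : 1 ≤ (1 + 4*u) * (1 - u) := by nlinarith
  nlinarith [Real.exp_pos (4*u)]

lemma aux_telescope (k : ℕ) :
    ((k+1 : ℕ) : ℝ) ^ (-(9/11) : ℝ)
      ≤ (11/2) * (((k+1 : ℕ) : ℝ) ^ ((2/11) : ℝ) - ((k : ℕ) : ℝ) ^ ((2/11) : ℝ)) := by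
  set m : ℝ := (k : ℝ) + 1 with hm
  have hm1 : (1:ℝ) ≤ m := by have := Nat.cast_nonneg (α := ℝ) k; linarith [hm]
  have hmpos : (0:ℝ) < m := by linarith
  have hcast : ((k+1 : ℕ) : ℝ) = m := by push_cast [hm]; ring
  have hk : ((k:ℕ):ℝ) = m - 1 := by push_cast [hm]; ring
  rw [hcast, hk]
  -- (m-1)^(2/11) ≤ m^(2/11) * (1 - (2/11)/m)
  have hb : (1 + (-(1/m))) ^ ((2/11):ℝ) ≤ 1 + (2/11) * (-(1/m)) := by
    refine rpow_one_add_le_one_add_mul_self ?_ (by norm_num) (by norm_num)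
    have : 1/m ≤ 1 := by
      rw [div_le_one hmpos]; exact hm1
    linarith
  have hfac : (0:ℝ) ≤ 1 + (-(1/m)) := by
    have : 1/m ≤ 1 := by rw [div_le_one hmpos]; exact hm1
    linarith
  have hmul : (m - 1) ^ ((2/11):ℝ) = m ^ ((2/11):ℝ) * (1 + (-(1/m))) ^ ((2/11):ℝ) := by
    rw [← Real.mul_rpow (le_of_lt hmpos) hfac]
    congr 1
    have : m ≠ 0 := ne_of_gt hmpos
    field_simp
    ring
  have hstep : (m - 1) ^ ((2/11):ℝ) ≤ m ^ ((2/11):ℝ) * (1 + (2/11) * (-(1/m))) := by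
    rw [hmul]
    exact mul_le_mul_of_nonneg_left hb (Real.rpow_nonneg (le_of_lt hmpos) _)
  have hpow : m ^ ((2/11):ℝ) * (1/m) = m ^ ((-(9/11)):ℝ) := by
    rw [one_div, ← Real.rpow_neg_one m, ← Real.rpow_add hmpos]
    norm_num
  have h9 : (0:ℝ) ≤ m ^ (-(9/11):ℝ) := Real.rpow_nonneg (le_of_lt hmpos) _
  nlinarith [hstep, hpow]

lemma aux_sum_primes (N : ℕ) :
    ∑ p ∈ N.primesBelow, ((p : ℕ) : ℝ) ^ (-(9/11) : ℝ)
      ≤ (11/2) * ((N : ℕ) : ℝ) ^ ((2/11) : ℝ) := by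
  have h1 : ∑ p ∈ N.primesBelow, ((p : ℕ) : ℝ) ^ (-(9/11) : ℝ)
      ≤ ∑ n ∈ Finset.range (N+1), ((n : ℕ) : ℝ) ^ (-(9/11) : ℝ) := by
    refine Finset.sum_le_sum_of_subset_of_nonneg ?_ ?_
    · intro p hp
      exact Finset.mem_range.mpr (Nat.lt_succ_of_lt (Nat.lt_of_mem_primesBelow hp))
    · intro i _ _; positivity
  have h2 : ∑ n ∈ Finset.range (N+1), ((n : ℕ) : ℝ) ^ (-(9/11) : ℝ)
      = ∑ k ∈ Finset.range N, ((k+1 : ℕ) : ℝ) ^ (-(9/11) : ℝ) := by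
    rw [Finset.sum_range_succ']
    simp [Real.zero_rpow (by norm_num : (-(9/11):ℝ) ≠ 0)]
  have h3 : ∑ k ∈ Finset.range N, ((k+1 : ℕ) : ℝ) ^ (-(9/11) : ℝ)
      ≤ ∑ k ∈ Finset.range N,
        (11/2) * (((k+1 : ℕ) : ℝ) ^ ((2/11) : ℝ) - ((k : ℕ) : ℝ) ^ ((2/11) : ℝ)) :=
    Finset.sum_le_sum fun k _ => aux_telescope k
  have h4 : ∑ k ∈ Finset.range N,
        (11/2) * (((k+1 : ℕ) : ℝ) ^ ((2/11) : ℝ) - ((k : ℕ) : ℝ) ^ ((2/11) : ℝ))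
      = (11/2) * ((N:ℝ) ^ ((2/11):ℝ) - ((0:ℕ):ℝ) ^ ((2/11):ℝ)) := by
    rw [← Finset.mul_sum]
    congr 1
    exact Finset.sum_range_sub (fun k => ((k:ℕ):ℝ) ^ ((2/11):ℝ)) N
  rw [h4] at h3
  have h0 : ((0:ℕ):ℝ) ^ ((2/11):ℝ) = 0 := by
    simp [Real.zero_rpow (by norm_num : ((2/11):ℝ) ≠ 0)]
  calc _ ≤ _ := h1
    _ = _ := h2
    _ ≤ _ := h3
    _ = _ := by rw [h0]; ring


lemma aux_base_anti {a b e : ℝ} (ha : 0 < a) (hab : a ≤ b) (he : 0 ≤ e) :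
    b ^ (-e) ≤ a ^ (-e) := by
  rw [Real.rpow_neg (le_trans ha.le hab), Real.rpow_neg ha.le]
  exact inv_anti₀ (Real.rpow_pos_of_pos ha _)
    (Real.rpow_le_rpow ha.le hab he)

/-- the completely multiplicative function `n ↦ n^(-9/11)` -/
def fmul : ℕ →* ℝ where
  toFun n := ((n:ℕ):ℝ) ^ (-(9/11) : ℝ)
  map_one' := by simp
  map_mul' m n := by
    push_cast
    exact Real.mul_rpow (Nat.cast_nonneg m) (Nat.cast_nonneg n)

lemma fmul_apply (n : ℕ) : fmul n = ((n:ℕ):ℝ) ^ (-(9/11) : ℝ) := rfl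

lemma aux_sum_le_prod (N : ℕ) (F : Finset ℕ) (hF : ∀ c ∈ F, c ∈ N.smoothNumbers) :
    ∑ c ∈ F, ((c:ℕ):ℝ) ^ (-(9/11) : ℝ)
      ≤ ∏ p ∈ N.primesBelow, (1 - ((p:ℕ):ℝ) ^ (-(9/11) : ℝ))⁻¹ := by
  have hnorm : ∀ {p : ℕ}, p.Prime → ‖fmul p‖ < 1 := by
    intro p hp
    rw [fmul_apply, Real.norm_eq_abs, abs_of_nonneg (Real.rpow_nonneg (Nat.cast_nonneg p) _)]
    exact Real.rpow_lt_one_of_one_lt_of_neg (by exact_mod_cast hp.one_lt) (by norm_num)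
  have key := EulerProduct.summable_and_hasSum_smoothNumbers_prod_primesBelow_geometric
    (f := fmul) hnorm N
  have hsum : Summable (fun m : N.smoothNumbers => fmul m) := key.1.of_norm
  have htsum : ∑' (m : N.smoothNumbers), fmul m
      = ∏ p ∈ N.primesBelow, (1 - fmul p)⁻¹ := key.2.tsum_eq
  have hind : Summable (Set.indicator (N.smoothNumbers) (fun n => fmul n)) :=
    (summable_subtype_iff_indicator).mp hsum
  have hnn : ∀ n, 0 ≤ Set.indicator (N.smoothNumbers) (fun n => fmul n) n := by
    intro n
    exact Set.indicator_nonneg (fun m _ => Real.rpow_nonneg (Nat.cast_nonneg m) _) n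
  calc ∑ c ∈ F, ((c:ℕ):ℝ) ^ (-(9/11) : ℝ)
      = ∑ c ∈ F, Set.indicator (N.smoothNumbers) (fun n => fmul n) c := by
        refine Finset.sum_congr rfl fun c hc => ?_
        rw [Set.indicator_of_mem (hF c hc)]
        rfl
    _ ≤ ∑' n, Set.indicator (N.smoothNumbers) (fun n => fmul n) n :=
        Summable.sum_le_tsum F (fun i _ => hnn i) hind
    _ = ∑' (m : N.smoothNumbers), fmul m := (_root_.tsum_subtype _ _).symm
    _ = ∏ p ∈ N.primesBelow, (1 - ((p:ℕ):ℝ) ^ (-(9/11) : ℝ))⁻¹ := htsum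

lemma aux_u_bound {p : ℕ} (hp : 2 ≤ p) :
    ((p:ℕ):ℝ) ^ (-(9/11) : ℝ) ≤ 3/4 := by
  have hp2 : (2:ℝ) ≤ (p:ℝ) := by exact_mod_cast hp
  have h1 : ((p:ℕ):ℝ) ^ (-(9/11) : ℝ) ≤ (2:ℝ) ^ (-(9/11) : ℝ) := by
    rw [Real.rpow_neg (by norm_num), Real.rpow_neg (by positivity)]
    exact inv_anti₀ (Real.rpow_pos_of_pos (by norm_num) _)
      (Real.rpow_le_rpow (by norm_num) hp2 (by norm_num))
  have h2 : (2:ℝ) ^ (-(9/11) : ℝ) ≤ (2:ℝ) ^ (-(1/2) : ℝ) :=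
    Real.rpow_le_rpow_of_exponent_le (by norm_num) (by norm_num)
  have h3 : (2:ℝ) ^ (-(1/2) : ℝ) ≤ 3/4 := by
    rw [Real.rpow_neg (by norm_num)]
    have hs : (2:ℝ) ^ ((1/2) : ℝ) = Real.sqrt 2 := (Real.sqrt_eq_rpow 2).symm
    rw [hs]
    have h4 : (4/3 : ℝ) ≤ Real.sqrt 2 := by
      nlinarith [Real.sq_sqrt (by norm_num : (0:ℝ) ≤ 2), Real.sqrt_nonneg 2]
    have h5 : (0:ℝ) < Real.sqrt 2 := by nlinarith
    rw [inv_le_comm₀ h5 (by norm_num)] at *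
    · linarith
  linarith

lemma aux_prod (N : ℕ) :
    ∏ p ∈ N.primesBelow, (1 - ((p:ℕ):ℝ) ^ (-(9/11) : ℝ))⁻¹
      ≤ Real.exp (22 * ((N:ℕ):ℝ) ^ ((2/11) : ℝ)) := by
  have hstep : ∏ p ∈ N.primesBelow, (1 - ((p:ℕ):ℝ) ^ (-(9/11) : ℝ))⁻¹
      ≤ ∏ p ∈ N.primesBelow, Real.exp (4 * ((p:ℕ):ℝ) ^ (-(9/11) : ℝ)) := by
    refine Finset.prod_le_prod ?_ ?_
    · intro p hp
      have h34 := aux_u_bound (Nat.prime_of_mem_primesBelow hp).two_le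
      have : (0:ℝ) < 1 - ((p:ℕ):ℝ) ^ (-(9/11) : ℝ) := by linarith
      positivity
    · intro p hp
      exact aux_inv_le_exp (Real.rpow_nonneg (Nat.cast_nonneg p) _)
        (aux_u_bound (Nat.prime_of_mem_primesBelow hp).two_le)
  calc _ ≤ _ := hstep
    _ = Real.exp (∑ p ∈ N.primesBelow, 4 * ((p:ℕ):ℝ) ^ (-(9/11) : ℝ)) :=
        (Real.exp_sum _ _).symm
    _ ≤ _ := by
        rw [Real.exp_le_exp]
        have := aux_sum_primes N
        rw [← Finset.mul_sum]
        nlinarith [this]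


/-- The Class III estimate (7.6): the sum of `1/c` over
`(log x · log log x)^5`-smooth integers `c ∈ (z^(1/2), z]` is
at most `C · x^(-ακ/300)`, uniformly for `x^(ακ/25) ≤ z ≤ x`. -/
theorem class_III_smooth_sum (α κ : ℝ) (hα : 0 < α) (hα' : α < 1/2)
    (hκ : 0 < κ) (hκ' : κ < 1/2) :
    ∃ C : ℝ, 0 < C ∧ ∃ x0 : ℝ, ∀ x : ℝ, x0 ≤ x →
      ∀ z : ℝ, x ^ (α * κ / 25) ≤ z → z ≤ x →
      ∑ c ∈ (Finset.Icc 1 ⌊z⌋₊).filter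
          (fun c : ℕ => z ^ ((2 : ℝ)⁻¹) < (c : ℝ) ∧
            ∀ p ∈ c.primeFactors,
              (p : ℝ) ≤ (Real.log x * Real.log (Real.log x)) ^ (5 : ℕ)),
          1 / (c : ℝ)
        ≤ C * x ^ (-(α * κ / 300)) := by
  obtain ⟨ε, hε⟩ : ∃ ε : ℝ, ε = α * κ / 3300 := ⟨_, rfl⟩
  have hεpos : 0 < ε := by rw [hε]; positivity
  -- the eventual condition on x
  have h1 : Filter.Tendsto (fun L : ℝ => L ^ (-(3/55) : ℝ)) Filter.atTop (nhds 0) :=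
    tendsto_rpow_neg_atTop (by norm_num)
  have h2 : ∀ᶠ L : ℝ in Filter.atTop, L ^ (-(3/55) : ℝ) < ε / 220000000 :=
    h1.eventually_lt_const (by positivity)
  have h3 : ∀ᶠ L : ℝ in Filter.atTop, 220000000 * L ^ ((52/55) : ℝ) ≤ ε * L := by
    filter_upwards [h2, Filter.eventually_ge_atTop (1:ℝ)] with L hL2 hL1
    have hLpos : (0:ℝ) < L := by linarith
    have hsplit : L ^ ((52/55) : ℝ) = L * L ^ (-(3/55) : ℝ) := by
      rw [show ((52/55):ℝ) = 1 + (-(3/55)) by norm_num, Real.rpow_add hLpos, Real.rpow_one]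
    rw [hsplit]
    have h5 := mul_le_mul_of_nonneg_left hL2.le hLpos.le
    nlinarith
  have h4 : ∀ᶠ x : ℝ in Filter.atTop,
      220000000 * (Real.log x) ^ ((52/55) : ℝ) ≤ ε * Real.log x :=
    Real.tendsto_log_atTop.eventually h3
  obtain ⟨x0, hx0⟩ := Filter.eventually_atTop.mp (h4.and (Filter.eventually_ge_atTop (16:ℝ)))
  refine ⟨1, one_pos, x0, fun x hx z hz1 hz2 => ?_⟩
  obtain ⟨hxcond, hx16⟩ := hx0 x hx
  have hxpos : (0:ℝ) < x := by linarith
  have hx1 : (1:ℝ) < x := by linarith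
  obtain ⟨L, hLdef⟩ : ∃ L : ℝ, L = Real.log x := ⟨_, rfl⟩
  have hL1 : (1:ℝ) ≤ L := by
    have h16 : (1:ℝ) ≤ Real.log 16 := by
      rw [Real.le_log_iff_exp_le (by norm_num)]
      have := Real.exp_one_lt_d9
      linarith
    have := Real.log_le_log (by norm_num : (0:ℝ) < 16) hx16
    rw [hLdef]; linarith
  have hLpos : (0:ℝ) < L := by linarith
  obtain ⟨y, hy⟩ : ∃ y : ℝ, y = (Real.log x * Real.log (Real.log x)) ^ (5 : ℕ) := ⟨_, rfl⟩
  have hy' : y = (L * Real.log L) ^ (5 : ℕ) := by rw [hy, hLdef]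
  have hlogL : Real.log L ≤ 25 * L ^ ((1/25) : ℝ) := by
    have h := Real.log_le_rpow_div hLpos.le (by norm_num : (0:ℝ) < 1/25)
    rw [le_div_iff₀ (by norm_num : (0:ℝ) < 1/25)] at h
    linarith
  have hlogLnn : 0 ≤ Real.log L := Real.log_nonneg hL1
  have hybound : y ≤ 9765625 * L ^ ((26/5) : ℝ) := by
    have hB : L * Real.log L ≤ L * (25 * L ^ ((1/25) : ℝ)) :=
      mul_le_mul_of_nonneg_left hlogL hLpos.le
    have hynn : 0 ≤ L * Real.log L := mul_nonneg hLpos.le hlogLnn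
    have hpow := pow_le_pow_left₀ hynn hB 5
    rw [hy']
    refine le_trans hpow ?_
    have hexp : (L * (25 * L ^ ((1/25) : ℝ))) ^ (5:ℕ)
        = 9765625 * (L ^ (5:ℕ) * (L ^ ((1/25) : ℝ)) ^ (5:ℕ)) := by ring
    rw [hexp]
    have h5 : (L ^ ((1/25) : ℝ)) ^ (5:ℕ) = L ^ ((1/5) : ℝ) := by
      rw [← Real.rpow_natCast (L ^ ((1/25) : ℝ)) 5, ← Real.rpow_mul hLpos.le]
      norm_num
    have h6 : L ^ (5:ℕ) = L ^ ((5:ℝ)) := (Real.rpow_natCast L 5).symm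
    rw [h5, h6, ← Real.rpow_add hLpos]
    norm_num
  have hynn : 0 ≤ y := by
    rw [hy']
    positivity
  obtain ⟨N, hN⟩ : ∃ N : ℕ, N = ⌊y⌋₊ + 1 := ⟨_, rfl⟩
  have hNy : (N:ℝ) ≤ y + 1 := by
    rw [hN]
    push_cast
    have := Nat.floor_le hynn
    linarith
  have hL26 : (1:ℝ) ≤ L ^ ((26/5) : ℝ) := Real.one_le_rpow hL1 (by norm_num)
  have hNbound : (N:ℝ) ≤ 10000000 * L ^ ((26/5) : ℝ) := by nlinarith
  have hN211 : ((N:ℕ):ℝ) ^ ((2/11) : ℝ) ≤ 10000000 * L ^ ((52/55) : ℝ) := by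
    have hstep : ((N:ℕ):ℝ) ^ ((2/11) : ℝ)
        ≤ (10000000 * L ^ ((26/5) : ℝ)) ^ ((2/11) : ℝ) :=
      Real.rpow_le_rpow (Nat.cast_nonneg N) hNbound (by norm_num)
    refine le_trans hstep ?_
    rw [Real.mul_rpow (by norm_num) (Real.rpow_nonneg hLpos.le _)]
    have ha : ((10000000:ℝ)) ^ ((2/11) : ℝ) ≤ 10000000 := by
      have := Real.rpow_le_rpow_of_exponent_le (by norm_num : (1:ℝ) ≤ 10000000)
        (by norm_num : (2/11:ℝ) ≤ 1)
      rwa [Real.rpow_one] at this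
    have hb : (L ^ ((26/5) : ℝ)) ^ ((2/11) : ℝ) = L ^ ((52/55) : ℝ) := by
      rw [← Real.rpow_mul hLpos.le]
      norm_num
    rw [hb]
    exact mul_le_mul_of_nonneg_right ha (Real.rpow_nonneg hLpos.le _)
  -- the exponential factor is at most x ^ ε
  have hexpfac : Real.exp (22 * ((N:ℕ):ℝ) ^ ((2/11) : ℝ)) ≤ x ^ ε := by
    rw [Real.rpow_def_of_pos hxpos, Real.exp_le_exp]
    have h7 : 22 * ((N:ℕ):ℝ) ^ ((2/11) : ℝ) ≤ 220000000 * L ^ ((52/55) : ℝ) := by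
      nlinarith
    rw [← hLdef]
    calc 22 * ((N:ℕ):ℝ) ^ ((2/11) : ℝ) ≤ 220000000 * L ^ ((52/55) : ℝ) := h7
      _ ≤ ε * L := by rw [hLdef]; exact hxcond
      _ = L * ε := by ring
  -- z facts
  have hz0 : (0:ℝ) < z := by
    have : (1:ℝ) ≤ x ^ (α * κ / 25) := Real.one_le_rpow hx1.le (by positivity)
    linarith
  obtain ⟨F, hF⟩ : ∃ F : Finset ℕ, F = (Finset.Icc 1 ⌊z⌋₊).filter
      (fun c : ℕ => z ^ ((2 : ℝ)⁻¹) < (c : ℝ) ∧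
        ∀ p ∈ c.primeFactors,
          (p : ℝ) ≤ (Real.log x * Real.log (Real.log x)) ^ (5 : ℕ)) := ⟨_, rfl⟩
  rw [← hF]
  have hFsmooth : ∀ c ∈ F, c ∈ N.smoothNumbers := by
    intro c hc
    rw [hF, Finset.mem_filter, Finset.mem_Icc] at hc
    obtain ⟨⟨hc1, _⟩, _, hcp⟩ := hc
    rw [Nat.mem_smoothNumbers]
    refine ⟨by omega, fun p hp => ?_⟩
    have hp' : p ∈ c.primeFactors := by
      rw [Nat.primeFactors]
      exact List.mem_toFinset.mpr hp
    have hple := hcp p hp'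
    have hfloor : p ≤ ⌊y⌋₊ := Nat.le_floor (by rw [hy]; exact_mod_cast hple)
    omega
  -- pointwise bound on terms
  have hterm : ∀ c ∈ F, 1 / (c:ℝ) ≤ z ^ (-(1/11) : ℝ) * ((c:ℕ):ℝ) ^ (-(9/11) : ℝ) := by
    intro c hc
    rw [hF, Finset.mem_filter, Finset.mem_Icc] at hc
    obtain ⟨⟨hc1, _⟩, hcz, _⟩ := hc
    have hcpos : (0:ℝ) < (c:ℝ) := by exact_mod_cast hc1
    have hsplit : 1 / (c:ℝ) = ((c:ℕ):ℝ) ^ (-(2/11) : ℝ) * ((c:ℕ):ℝ) ^ (-(9/11) : ℝ) := by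
      rw [← Real.rpow_add hcpos, one_div, ← Real.rpow_neg_one (c:ℝ)]
      norm_num
    rw [hsplit]
    refine mul_le_mul_of_nonneg_right ?_ (Real.rpow_nonneg hcpos.le _)
    have hzhalfpos : (0:ℝ) < z ^ ((2:ℝ)⁻¹) := Real.rpow_pos_of_pos hz0 _
    have hanti := aux_base_anti hzhalfpos hcz.le (by norm_num : (0:ℝ) ≤ 2/11)
    refine le_trans hanti ?_
    rw [← Real.rpow_mul hz0.le]
    norm_num
  -- assemble
  have hsum1 : ∑ c ∈ F, 1/(c:ℝ)
      ≤ z ^ (-(1/11) : ℝ) * ∑ c ∈ F, ((c:ℕ):ℝ) ^ (-(9/11) : ℝ) := by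
    rw [Finset.mul_sum]
    exact Finset.sum_le_sum hterm
  have hsum2 := aux_sum_le_prod N F hFsmooth
  have hprod := aux_prod N
  have hznn : 0 ≤ z ^ (-(1/11) : ℝ) := Real.rpow_nonneg hz0.le _
  have hz11 : z ^ (-(1/11) : ℝ) ≤ x ^ (-(α*κ/275)) := by
    have h8 := aux_base_anti (Real.rpow_pos_of_pos hxpos (α*κ/25)) hz1
      (by norm_num : (0:ℝ) ≤ 1/11)
    refine le_trans h8 ?_
    rw [← Real.rpow_mul hxpos.le]
    refine le_of_eq ?_
    congr 1
    ring
  calc ∑ c ∈ F, 1/(c:ℝ)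
      ≤ z ^ (-(1/11) : ℝ) * ∑ c ∈ F, ((c:ℕ):ℝ) ^ (-(9/11) : ℝ) := hsum1
    _ ≤ z ^ (-(1/11) : ℝ) * ∏ p ∈ N.primesBelow, (1 - ((p:ℕ):ℝ) ^ (-(9/11) : ℝ))⁻¹ :=
        mul_le_mul_of_nonneg_left hsum2 hznn
    _ ≤ z ^ (-(1/11) : ℝ) * Real.exp (22 * ((N:ℕ):ℝ) ^ ((2/11) : ℝ)) :=
        mul_le_mul_of_nonneg_left hprod hznn
    _ ≤ x ^ (-(α*κ/275)) * x ^ ε :=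
        mul_le_mul hz11 hexpfac (Real.exp_nonneg _) (Real.rpow_nonneg hxpos.le _)
    _ = x ^ (-(α * κ / 300)) := by
        rw [← Real.rpow_add hxpos, hε]
        congr 1
        ring
    _ = 1 * x ^ (-(α * κ / 300)) := (one_mul _).symm

end
end

section
/- Fix β > 0 with β ≤ 1/164, a constant A1 > 0, and a function A2 : (0,∞) → (0,∞). Then there exist a constant C > 0 and a threshold z0 such that for all x ≥ z ≥ z0, every nonnegative multiplicative f with f(p^l) ≤ A1^l for all primes p and integers l ≥ 1 and f(n) ≤ A2(ε) n^ε for all n ≥ 1 and all ε > 0, every integer k ≥ 1, and every real r with 1 ≤ r ≤ (log z)/(4 log log z): ∑ f(n)/n, taken over all J-rough integers n with n ≥ z^{1/2}, gcd(n,k) = 1, and largest prime factor p(n) ≤ z^{1/r}, is at most C · exp(−(1/2)(1 − (5/4)β) r log r + ∑_{p ≤ z prime, p ∤ k} f(p)/p), where J = (log log x)^{1−β}. -/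
open Finset

noncomputable section

/-- Shiu's class `M`: `f (p^l) ≤ A1^l` for all primes `p` and `l ≥ 1`, and
`f n ≤ A2 ε * n^ε` for every `ε > 0` and every `n ≥ 1`. -/
def InM (f : ℕ → ℝ) (A1 : ℝ) (A2 : ℝ → ℝ) : Prop :=
  (∀ p : ℕ, p.Prime → ∀ l : ℕ, 1 ≤ l → f (p ^ l) ≤ A1 ^ l) ∧
  (∀ ε : ℝ, 0 < ε → ∀ n : ℕ, 1 ≤ n → f n ≤ A2 ε * (n : ℝ) ^ ε)


open Real

/-!
Rankin's trick: for `n ≥ z^(1/2)` and `δ ≤ 1` we have `1/n ≤ z^((δ-1)/2) n^(-δ)`, so the sum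
is at most `z^((δ-1)/2)` times the Euler product of `f(n) n^(-δ)` over the primes
`J < p ≤ y = z^(1/r)` with `p ∤ k`. These primes are large compared with `A1`, so each Euler
factor is at most `exp (f(p) p^(-δ) + O(p^(-3/2)))`. With `1 - δ = (1 - β) r log r / log z` the
weight is `exp (-(1/2)(1 - β) r log r)`, while `p^(-δ) - p^(-1) ≤ (1 - δ) y^(1-δ) log p / p` and
Chebyshev's bound `∑_{p ≤ y} log p / p = O(log y)` make the excess `∑ f(p) (p^(-δ) - p^(-1))`
at most `O(r^(1-β) log r)`, which is below `(β/8) r log r` up to a constant.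
-/


theorem sum_primesLE_succ {M : Type*} [AddCommMonoid M] (F : ℕ → M) (n : ℕ) :
    ∑ p ∈ (n + 1).primesLE, F p
      = ∑ p ∈ n.primesLE, F p + if (n + 1).Prime then F (n + 1) else 0 := by
  rw [Nat.primesLE_succ]
  split_ifs
  · rw [sum_insert (Nat.notMem_primesLE n), add_comm]
  · rw [add_zero]

theorem sum_primesLE_log_div_le_theta_add_harmonic (N : ℕ) :
    ∑ p ∈ N.primesLE, log p / p ≤ Chebyshev.theta N / N + log 4 * harmonic N := by
  induction N with
  | zero => simp
  | succ n ih =>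
    have hθ : Chebyshev.theta (n + 1 : ℕ) =
        Chebyshev.theta n + if (n + 1).Prime then log (n + 1 : ℕ) else 0 := by
      simp only [Chebyshev.theta_eq_sum_primesLE_log, sum_primesLE_succ]
    have hθn : Chebyshev.theta n / n ≤ Chebyshev.theta n / (n + 1) + log 4 / (n + 1) := by
      rcases n.eq_zero_or_pos with rfl | hn
      · simp [log_nonneg]
      have := Chebyshev.theta_le_log4_mul_x (Nat.cast_nonneg (α := ℝ) n)
      rw [← add_div, div_le_div_iff₀ (by positivity) (by positivity)]
      nlinarith
    rw [sum_primesLE_succ, hθ, harmonic_succ]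
    push_cast
    split_ifs <;> simp only [add_zero, add_div, mul_add, ← div_eq_mul_inv] <;> linarith

theorem sum_primesLE_log_div_le {y : ℝ} (hy : 1 ≤ y) :
    ∑ p ∈ ⌊y⌋₊.primesLE, log p / p ≤ log 4 * (2 + log y) := by
  set N := ⌊y⌋₊
  have hN : (1 : ℝ) ≤ N := by exact_mod_cast Nat.le_floor (by exact_mod_cast hy)
  have hθ : Chebyshev.theta N / N ≤ log 4 := by
    rw [div_le_iff₀ (by linarith)]
    exact Chebyshev.theta_le_log4_mul_x (by linarith)
  have hH : (harmonic N : ℝ) ≤ 1 + log y := (harmonic_le_one_add_log N).trans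
    (add_le_add_right (log_le_log (by linarith) (Nat.floor_le (by linarith))) 1)
  have := sum_primesLE_log_div_le_theta_add_harmonic N
  have : 0 ≤ log 4 := log_nonneg (by norm_num)
  nlinarith

theorem rpow_neg_sub_inv_le {t y δ : ℝ} (ht : 1 ≤ t) (hty : t ≤ y) (hδ : δ ≤ 1) :
    t ^ (-δ) - t⁻¹ ≤ (1 - δ) * y ^ (1 - δ) * (log t / t) := by
  have ht0 : 0 < t := by linarith
  set v := t ^ (1 - δ)
  have hv : 0 < v := by positivity
  have hv_sub : v - 1 ≤ v * ((1 - δ) * log t) := by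
    rw [← log_rpow ht0]
    have := one_sub_inv_le_log_of_pos hv
    calc v - 1 = v * (1 - v⁻¹) := by field_simp
      _ ≤ v * log v := by gcongr
  have hvy : v ≤ y ^ (1 - δ) := rpow_le_rpow ht0.le hty (by linarith)
  have hlog : 0 ≤ (1 - δ) * log t := mul_nonneg (by linarith) (log_nonneg ht)
  calc t ^ (-δ) - t⁻¹ = (v - 1) / t := by
        rw [show -δ = (1 - δ) - 1 by ring, rpow_sub_one ht0.ne']; ring
    _ ≤ v * ((1 - δ) * log t) / t := by gcongr
    _ ≤ y ^ (1 - δ) * ((1 - δ) * log t) / t := by gcongr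
    _ = (1 - δ) * y ^ (1 - δ) * (log t / t) := by ring

theorem sum_rpow_neg_sub_inv_le_of_prime {δ y : ℝ} (hδ : δ ≤ 1) (hy0 : 0 < y)
    (hy : 2 ≤ log y) {P : Finset ℕ} (hP : ∀ p ∈ P, p.Prime ∧ (p : ℝ) ≤ y) :
    ∑ p ∈ P, ((p : ℝ) ^ (-δ) - (p : ℝ)⁻¹) ≤ 3 * ((1 - δ) * log y * y ^ (1 - δ)) := by
  have hy1 : 1 ≤ y := ((log_pos_iff hy0.le).1 (by linarith)).le
  have hPN : P ⊆ ⌊y⌋₊.primesLE := fun p hp =>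
    Nat.mem_primesLE.2 ⟨Nat.le_floor (hP p hp).2, (hP p hp).1⟩
  have hlog4 : log 4 * (2 + log y) ≤ 3 * log y := by
    have : log 4 ≤ 3 / 2 := by
      rw [show (4 : ℝ) = 2 ^ 2 by norm_num, log_pow]
      linarith [log_two_lt_d9]
    nlinarith [log_nonneg (show (1 : ℝ) ≤ 4 by norm_num)]
  have hc : 0 ≤ (1 - δ) * y ^ (1 - δ) := mul_nonneg (by linarith) (by positivity)
  calc ∑ p ∈ P, ((p : ℝ) ^ (-δ) - (p : ℝ)⁻¹)
      ≤ ∑ p ∈ P, (1 - δ) * y ^ (1 - δ) * (log p / p) := sum_le_sum fun p hp =>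
        rpow_neg_sub_inv_le (by exact_mod_cast (hP p hp).1.one_le) (hP p hp).2 hδ
    _ = (1 - δ) * y ^ (1 - δ) * ∑ p ∈ P, log p / p := (mul_sum ..).symm
    _ ≤ (1 - δ) * y ^ (1 - δ) * (3 * log y) := by
        refine mul_le_mul_of_nonneg_left (le_trans ?_ hlog4) hc
        exact (sum_le_sum_of_subset_of_nonneg hPN fun p _ _ => by positivity).trans
          (sum_primesLE_log_div_le hy1)
    _ = 3 * ((1 - δ) * log y * y ^ (1 - δ)) := by ring

theorem sum_range_le_exp_of_le_geom {a : ℕ → ℝ} {q : ℝ} (ha : ∀ l, 0 ≤ a l) (ha0 : a 0 = 1)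
    (hq0 : 0 ≤ q) (hq : q ≤ 1 / 2) (haq : ∀ l, 2 ≤ l → a l ≤ q ^ l) (M : ℕ) :
    ∑ l ∈ range M, a l ≤ exp (a 1 + 2 * q ^ 2) := by
  have htail : ∑ l ∈ Ico 2 (M + 2), a l ≤ 2 * q ^ 2 := calc
    ∑ l ∈ Ico 2 (M + 2), a l ≤ ∑ l ∈ Ico 2 (M + 2), q ^ l :=
      sum_le_sum fun l hl => haq l (mem_Ico.1 hl).1
    _ ≤ q ^ 2 / (1 - q) := geom_sum_Ico_le_of_lt_one hq0 (by linarith)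
    _ ≤ 2 * q ^ 2 := by rw [div_le_iff₀ (by linarith)]; nlinarith [sq_nonneg q]
  calc ∑ l ∈ range M, a l ≤ ∑ l ∈ range (M + 2), a l :=
        sum_le_sum_of_subset_of_nonneg (range_mono (by omega)) fun l _ _ => ha l
    _ = 1 + a 1 + ∑ l ∈ Ico 2 (M + 2), a l := by
        rw [range_eq_Ico, sum_eq_sum_Ico_succ_bot (by omega),
          sum_eq_sum_Ico_succ_bot (by omega), ha0]
        simp only [zero_add, Nat.reduceAdd, add_assoc]
    _ ≤ 1 + (a 1 + 2 * q ^ 2) := by linarith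
    _ ≤ exp (a 1 + 2 * q ^ 2) := by linarith [add_one_le_exp (a 1 + 2 * q ^ 2)]

theorem inv_le_rpow_mul_rpow_neg {t w δ : ℝ} (hw : 0 < w) (hwt : w ≤ t) (hδ : δ ≤ 1) :
    t⁻¹ ≤ w ^ (δ - 1) * t ^ (-δ) := by
  have ht : 0 < t := hw.trans_le hwt
  calc t⁻¹ = t ^ (δ - 1) * t ^ (-δ) := by
        rw [← rpow_add ht, show δ - 1 + -δ = -1 by ring, rpow_neg_one]
    _ ≤ w ^ (δ - 1) * t ^ (-δ) :=
        mul_le_mul_of_nonneg_right (rpow_le_rpow_of_nonpos hw hwt (by linarith)) (by positivity)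

theorem exists_mul_log_mul_rpow_le {c ε β : ℝ} (hc : 0 ≤ c) (hε : 0 < ε) (hβ : 0 < β) :
    ∃ K, ∀ r, 1 ≤ r → c * (log r * r ^ (1 - β)) ≤ ε * (r * log r) + K := by
  set R := (c / ε) ^ β⁻¹
  refine ⟨c * (R * R), fun r hr => ?_⟩
  have hr0 : 0 < r := by linarith
  have hlog : 0 ≤ log r := log_nonneg hr
  have hR : 0 ≤ R := by positivity
  by_cases h : c ≤ ε * r ^ β
  · have : c * r ^ (1 - β) ≤ ε * r := calc
      c * r ^ (1 - β) ≤ ε * r ^ β * r ^ (1 - β) := by gcongr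
      _ = ε * r := by rw [mul_assoc, ← rpow_add hr0, add_sub_cancel, rpow_one]
    nlinarith [mul_nonneg hc (mul_nonneg hR hR)]
  · have hrR : r ≤ R := (le_rpow_inv_iff_of_pos hr0.le (by positivity) hβ).2
      ((le_div_iff₀' hε).2 (by linarith))
    have : r ^ (1 - β) ≤ R :=
      (rpow_le_rpow_of_exponent_le hr (show 1 - β ≤ 1 by linarith)).trans (by rwa [rpow_one])
    have : log r * r ^ (1 - β) ≤ R * R :=
      mul_le_mul ((log_le_self hr0.le).trans hrR) this (by positivity) hR
    nlinarith [mul_le_mul_of_nonneg_left this hc, mul_nonneg hε.le (mul_nonneg hr0.le hlog)]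

theorem le_log_log_of_exp_exp_le {a z : ℝ} (h : exp (exp a) ≤ z) : a ≤ log (log z) := by
  have hz : exp a ≤ log z := (le_log_iff_exp_le ((exp_pos _).trans_le h)).2 h
  exact (le_log_iff_exp_le ((exp_pos _).trans_le hz)).2 hz

theorem le_Jval {a x β : ℝ} (hβ : β ≤ 1 / 2) (ha : 0 ≤ a) (hx1 : 1 ≤ log (log x))
    (hax : a ^ 2 ≤ log (log x)) : a ≤ Jval x β := calc
  a = √(a ^ 2) := (sqrt_sq ha).symm
  _ ≤ √(log (log x)) := sqrt_le_sqrt hax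
  _ = log (log x) ^ (1 / 2 : ℝ) := sqrt_eq_rpow _
  _ ≤ Jval x β := rpow_le_rpow_of_exponent_le hx1 (by linarith)

theorem primeFactors_subset_filter {n k : ℕ} {J y z : ℝ} (hnk : n.Coprime k)
    (hJ : JRough J n) (hy : ∀ p ∈ n.primeFactors, (p : ℝ) ≤ y) (hyz : y ≤ z) :
    n.primeFactors ⊆ {p ∈ {p ∈ Icc 1 ⌊z⌋₊ | p.Prime ∧ ¬ p ∣ k} | J < p ∧ (p : ℝ) ≤ y} := by
  intro p hp
  have hpp := Nat.prime_of_mem_primeFactors hp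
  have hpk : ¬ p ∣ k :=
    hpp.coprime_iff_not_dvd.1 (hnk.coprime_dvd_left (Nat.dvd_of_mem_primeFactors hp))
  simp only [mem_filter, mem_Icc]
  exact ⟨⟨⟨hpp.one_le, Nat.le_floor ((hy p hp).trans hyz)⟩, hpp, hpk⟩, hJ p hp, hy p hp⟩

namespace MultNonneg

variable {f : ℕ → ℝ}

theorem mul_rpow (hf : MultNonneg f) (s : ℝ) : MultNonneg fun n => f n * (n : ℝ) ^ s := by
  refine ⟨fun n => mul_nonneg (hf.1 n) (by positivity), by simp [hf.2.1], fun m n hmn => ?_⟩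
  dsimp only
  rw [hf.2.2 m n hmn, Nat.cast_mul, Real.mul_rpow (Nat.cast_nonneg _) (Nat.cast_nonneg _)]
  ring

theorem sum_divisors_mul (hf : MultNonneg f) {m n : ℕ} (hmn : m.Coprime n) :
    ∑ d ∈ (m * n).divisors, f d = (∑ d ∈ m.divisors, f d) * ∑ d ∈ n.divisors, f d := by
  rw [Nat.Coprime.divisors_mul hmn, sum_map, sum_mul_sum, ← sum_product']
  refine (sum_attach (m.divisors ×ˢ n.divisors) fun d => f (d.1 * d.2)).trans
    (sum_congr rfl fun d hd => ?_)
  rw [mem_product, Nat.mem_divisors, Nat.mem_divisors] at hd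
  exact hf.2.2 _ _ ((hmn.coprime_dvd_left hd.1.1).coprime_dvd_right hd.2.1)

theorem sum_divisors_prod_pow (hf : MultNonneg f) {P : Finset ℕ} (hP : ∀ p ∈ P, p.Prime)
    (M : ℕ) :
    ∑ d ∈ (∏ p ∈ P, p ^ M).divisors, f d = ∏ p ∈ P, ∑ l ∈ range (M + 1), f (p ^ l) := by
  induction P using Finset.induction_on with
  | empty => simp [hf.2.1]
  | insert q P hq ih =>
    have hq_prime := hP q (mem_insert_self q P)
    have hP' : ∀ p ∈ P, p.Prime := fun p hp => hP p (mem_insert_of_mem hp)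
    have hcop : (q ^ M).Coprime (∏ p ∈ P, p ^ M) :=
      Nat.Coprime.prod_right fun p hp => Nat.Coprime.pow _ _ <|
        (Nat.coprime_primes hq_prime (hP' p hp)).2 (ne_of_mem_of_not_mem hp hq).symm
    rw [prod_insert hq, prod_insert hq, hf.sum_divisors_mul hcop,
      Nat.sum_divisors_prime_pow hq_prime, ih hP']

theorem sum_le_prod_sum_pow (hf : MultNonneg f) {P S : Finset ℕ} (hP : ∀ p ∈ P, p.Prime)
    {M : ℕ} (hS : ∀ n ∈ S, n ≠ 0 ∧ n.primeFactors ⊆ P ∧ ∀ p, n.factorization p ≤ M) :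
    ∑ n ∈ S, f n ≤ ∏ p ∈ P, ∑ l ∈ range (M + 1), f (p ^ l) := by
  rw [← hf.sum_divisors_prod_pow hP]
  refine sum_le_sum_of_subset_of_nonneg (fun n hn => ?_) fun _ _ _ => hf.1 _
  obtain ⟨hn0, hnP, hnM⟩ := hS n hn
  refine Nat.mem_divisors.2 ⟨?_, prod_ne_zero_iff.2 fun p hp => pow_ne_zero _ (hP p hp).ne_zero⟩
  calc n = ∏ p ∈ n.primeFactors, p ^ n.factorization p :=
        Nat.prod_primeFactors_pow_factorization hn0
    _ ∣ ∏ p ∈ n.primeFactors, p ^ M := prod_dvd_prod_of_dvd _ _ fun p _ => pow_dvd_pow p (hnM p)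
    _ ∣ ∏ p ∈ P, p ^ M := prod_dvd_prod_of_subset _ _ _ hnP

theorem sum_range_mul_rpow_le_exp (hf : MultNonneg f) {A1 δ : ℝ} (hδ : 3 / 4 ≤ δ) {p : ℕ}
    (hp : p.Prime) (hpA : 4 * A1 ^ 2 ≤ p) (hfp : ∀ l, 1 ≤ l → f (p ^ l) ≤ A1 ^ l) (M : ℕ) :
    ∑ l ∈ range M, f (p ^ l) * ((p ^ l : ℕ) : ℝ) ^ (-δ)
      ≤ exp (f p * (p : ℝ) ^ (-δ) + 2 * A1 ^ 2 * (p : ℝ) ^ (-(3 / 2 : ℝ))) := by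
  have hA1 : 0 ≤ A1 := (hf.1 p).trans (by simpa using hfp 1 le_rfl)
  have hp1 : (1 : ℝ) ≤ p := by exact_mod_cast hp.one_le
  set q := A1 * (p : ℝ) ^ (-δ)
  have hq2 : ∀ e : ℝ, e ≤ 2 * δ → q ^ 2 ≤ A1 ^ 2 * (p : ℝ) ^ (-e) := by
    intro e he
    have hsq : ((p : ℝ) ^ (-δ)) ^ 2 = (p : ℝ) ^ (-(2 * δ)) := by
      rw [← rpow_natCast, ← rpow_mul (by positivity)]
      ring_nf
    rw [mul_pow, hsq]
    exact mul_le_mul_of_nonneg_left (rpow_le_rpow_of_exponent_le hp1 (by linarith)) (sq_nonneg _)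
  have hq : q ≤ 1 / 2 := by
    have : A1 ^ 2 * (p : ℝ) ^ (-1 : ℝ) ≤ 1 / 4 := by
      rw [rpow_neg_one, ← div_eq_mul_inv, div_le_iff₀ (by positivity)]
      linarith
    nlinarith [hq2 1 (by linarith)]
  have hterm (l : ℕ) : ((p ^ l : ℕ) : ℝ) ^ (-δ) = ((p : ℝ) ^ (-δ)) ^ l := by
    rw [Nat.cast_pow, ← rpow_natCast, ← rpow_natCast, ← rpow_mul (by positivity),
      ← rpow_mul (by positivity), mul_comm (l : ℝ)]
  calc ∑ l ∈ range M, f (p ^ l) * ((p ^ l : ℕ) : ℝ) ^ (-δ)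
      ≤ exp (f p * (p : ℝ) ^ (-δ) + 2 * q ^ 2) := by
        refine sum_range_le_exp_of_le_geom (fun l => by positivity [hf.1 (p ^ l)])
          (by simp [hf.2.1]) (by positivity) hq (fun l hl => ?_) M |>.trans_eq (by simp)
        rw [hterm, mul_pow]
        exact mul_le_mul_of_nonneg_right (hfp l (by omega)) (by positivity)
    _ ≤ exp (f p * (p : ℝ) ^ (-δ) + 2 * A1 ^ 2 * (p : ℝ) ^ (-(3 / 2 : ℝ))) :=
        exp_le_exp.2 (by linarith [hq2 (3 / 2) (by linarith)])

theorem sum_div_le_rpow_mul_exp (hf : MultNonneg f) {A1 δ y w : ℝ} (hA1 : 0 ≤ A1)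
    (hfp : ∀ p : ℕ, p.Prime → ∀ l, 1 ≤ l → f (p ^ l) ≤ A1 ^ l)
    (hδ : 3 / 4 ≤ δ) (hδ1 : δ ≤ 1) (hy0 : 0 < y) (hy : 2 ≤ log y) (hw : 0 < w)
    {P S : Finset ℕ} (hP : ∀ p ∈ P, p.Prime ∧ 4 * A1 ^ 2 ≤ p ∧ (p : ℝ) ≤ y)
    (hS : ∀ n ∈ S, w ≤ n ∧ n.primeFactors ⊆ P) :
    ∑ n ∈ S, f n / n ≤ w ^ (δ - 1) * exp (∑ p ∈ P, f p / p
      + 3 * A1 * ((1 - δ) * log y * y ^ (1 - δ))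
      + 2 * A1 ^ 2 * ∑' n : ℕ, (n : ℝ) ^ (-(3 / 2 : ℝ))) := by
  set g : ℕ → ℝ := fun n => f n * (n : ℝ) ^ (-δ)
  have hS' : ∀ n ∈ S, n ≠ 0 ∧ n.primeFactors ⊆ P ∧ ∀ p, n.factorization p ≤ S.sup id := by
    intro n hn
    have hn0 : n ≠ 0 := by exact_mod_cast (hw.trans_le (hS n hn).1).ne'
    exact ⟨hn0, (hS n hn).2, fun p =>
      ((Nat.factorization_lt p hn0).trans_le (le_sup (f := id) hn)).le⟩
  have hprime : ∀ p ∈ P,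
      f p * (p : ℝ) ^ (-δ) ≤ f p / p + A1 * ((p : ℝ) ^ (-δ) - (p : ℝ)⁻¹) := by
    intro p hp
    have hp1 : (1 : ℝ) ≤ p := by exact_mod_cast (hP p hp).1.one_le
    have : (p : ℝ)⁻¹ ≤ (p : ℝ) ^ (-δ) := by
      rw [← rpow_neg_one]; exact rpow_le_rpow_of_exponent_le hp1 (by linarith)
    have : f p ≤ A1 := by simpa using hfp p (hP p hp).1 1 le_rfl
    rw [div_eq_mul_inv]
    nlinarith [hf.1 p]
  have hexcess := sum_rpow_neg_sub_inv_le_of_prime hδ1 hy0 hy fun p hp =>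
    ⟨(hP p hp).1, (hP p hp).2.2⟩
  have hzeta : ∑ p ∈ P, (p : ℝ) ^ (-(3 / 2 : ℝ)) ≤ ∑' n : ℕ, (n : ℝ) ^ (-(3 / 2 : ℝ)) :=
    (summable_nat_rpow.2 (by norm_num)).sum_le_tsum _ fun n _ => by positivity
  calc ∑ n ∈ S, f n / n ≤ ∑ n ∈ S, w ^ (δ - 1) * g n := sum_le_sum fun n hn => by
        rw [div_eq_mul_inv, mul_left_comm]
        exact mul_le_mul_of_nonneg_left (inv_le_rpow_mul_rpow_neg hw (hS n hn).1 hδ1) (hf.1 n)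
    _ = w ^ (δ - 1) * ∑ n ∈ S, g n := (mul_sum ..).symm
    _ ≤ w ^ (δ - 1) * ∏ p ∈ P, ∑ l ∈ range (S.sup id + 1), g (p ^ l) := by
        gcongr
        exact (hf.mul_rpow (-δ)).sum_le_prod_sum_pow (fun p hp => (hP p hp).1) hS'
    _ ≤ w ^ (δ - 1) * ∏ p ∈ P,
          exp (f p * (p : ℝ) ^ (-δ) + 2 * A1 ^ 2 * (p : ℝ) ^ (-(3 / 2 : ℝ))) := by
        refine mul_le_mul_of_nonneg_left (prod_le_prod (fun p _ => ?_) fun p hp => ?_)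
          (by positivity)
        · exact sum_nonneg fun l _ => (hf.mul_rpow (-δ)).1 _
        · exact hf.sum_range_mul_rpow_le_exp hδ (hP p hp).1 (hP p hp).2.1 (hfp p (hP p hp).1) _
    _ ≤ _ := by
        rw [← exp_sum]
        gcongr
        have hfirst := sum_le_sum hprime
        rw [sum_add_distrib, ← mul_sum] at hfirst
        rw [sum_add_distrib, ← mul_sum]
        nlinarith [mul_le_mul_of_nonneg_left hexcess hA1,
          mul_le_mul_of_nonneg_left hzeta (by positivity : (0 : ℝ) ≤ 2 * A1 ^ 2)]

theorem sum_div_le_exp_of_le_log_div (hf : MultNonneg f) {A1 β z r : ℝ} (hA1 : 0 ≤ A1)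
    (hfp : ∀ p : ℕ, p.Prime → ∀ l, 1 ≤ l → f (p ^ l) ≤ A1 ^ l) (hβ0 : 0 ≤ β) (hβ1 : β ≤ 1)
    (hz1 : 1 ≤ z) (hz : 1 ≤ log (log z)) (hr1 : 1 ≤ r) (hr : r ≤ log z / (4 * log (log z)))
    {P S : Finset ℕ} (hP : ∀ p ∈ P, p.Prime ∧ 4 * A1 ^ 2 ≤ p ∧ (p : ℝ) ≤ z ^ r⁻¹)
    (hS : ∀ n ∈ S, z ^ (2⁻¹ : ℝ) ≤ n ∧ n.primeFactors ⊆ P) :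
    ∑ n ∈ S, f n / n ≤ exp (-(1 / 2) * (1 - β) * (r * log r) + ∑ p ∈ P, f p / p
      + 3 * A1 * (log r * r ^ (1 - β)) + 2 * A1 ^ 2 * ∑' n : ℕ, (n : ℝ) ^ (-(3 / 2 : ℝ))) := by
  have hz0 : 0 < z := by linarith
  set L := log z with hL_def
  have hr0 : 0 < r := by linarith
  have hrL : r * (4 * log L) ≤ L := (le_div_iff₀ (by linarith)).1 hr
  have hL : 0 < L := by nlinarith
  have hlogr : 0 ≤ log r := log_nonneg hr1
  have hrlog : r * log r ≤ L / 4 := by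
    have : log r ≤ log L := log_le_log hr0 (by nlinarith)
    nlinarith
  set δ := 1 - (1 - β) * (r * log r) / L
  have h1δ : 1 - δ = (1 - β) * (r * log r) / L := by ring
  have hδ34 : 3 / 4 ≤ δ := by
    have : (1 - β) * (r * log r) / L ≤ 1 / 4 := by
      rw [div_le_iff₀ hL]; nlinarith [mul_nonneg hr0.le hlogr]
    linarith
  have hδ1 : δ ≤ 1 := by
    have : 0 ≤ (1 - β) * (r * log r) / L := by positivity
    linarith
  have hlogy : log (z ^ r⁻¹) = L / r := by rw [log_rpow hz0]; ring
  have hy : 2 ≤ log (z ^ r⁻¹) := by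
    rw [hlogy, le_div_iff₀ hr0]; nlinarith
  have hweight : (z ^ (2⁻¹ : ℝ)) ^ (δ - 1) = exp (-(1 / 2) * (1 - β) * (r * log r)) := by
    rw [← rpow_mul hz0.le, rpow_def_of_pos hz0, ← hL_def, show δ - 1 = -(1 - δ) by ring, h1δ]
    congr 1
    field_simp
  have hexcess : (1 - δ) * log (z ^ r⁻¹) * (z ^ r⁻¹) ^ (1 - δ)
      = (1 - β) * (log r * r ^ (1 - β)) := by
    have hexp : (1 - δ) * log (z ^ r⁻¹) = (1 - β) * log r := by
      rw [h1δ, hlogy]; field_simp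
    rw [rpow_def_of_pos (x := z ^ r⁻¹) (by positivity), mul_comm (log _), hexp,
      rpow_def_of_pos hr0, mul_comm (log r) (1 - β)]
    ring
  refine (hf.sum_div_le_rpow_mul_exp hA1 hfp hδ34 hδ1 (by positivity) hy (by positivity) hP
    hS).trans ?_
  rw [hweight, hexcess, ← exp_add]
  refine exp_le_exp.2 ?_
  nlinarith [mul_nonneg hβ0 (mul_nonneg hlogr (rpow_nonneg hr0.le (1 - β)))]

theorem tsum_le_exp_of_le_log_div (hf : MultNonneg f) {A1 β z r J : ℝ} (hA1 : 0 ≤ A1)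
    (hfp : ∀ p : ℕ, p.Prime → ∀ l, 1 ≤ l → f (p ^ l) ≤ A1 ^ l) (hβ0 : 0 ≤ β) (hβ1 : β ≤ 1)
    (hz1 : 1 ≤ z) (hz : 1 ≤ log (log z)) (hr1 : 1 ≤ r) (hr : r ≤ log z / (4 * log (log z)))
    (hJ : 4 * A1 ^ 2 ≤ J) (k : ℕ) :
    (∑' n : ℕ, if z ^ ((2 : ℝ)⁻¹) ≤ (n : ℝ) ∧ n.Coprime k ∧ JRough J n ∧
        (∀ p ∈ n.primeFactors, (p : ℝ) ≤ z ^ r⁻¹) then f n / (n : ℝ) else 0)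
      ≤ exp (-(1 / 2) * (1 - β) * (r * log r)
        + ∑ p ∈ {p ∈ Icc 1 ⌊z⌋₊ | p.Prime ∧ ¬ p ∣ k}, f p / p
        + 3 * A1 * (log r * r ^ (1 - β)) + 2 * A1 ^ 2 * ∑' n : ℕ, (n : ℝ) ^ (-(3 / 2 : ℝ))) := by
  set P : Finset ℕ := {p ∈ {p ∈ Icc 1 ⌊z⌋₊ | p.Prime ∧ ¬ p ∣ k} | J < p ∧ (p : ℝ) ≤ z ^ r⁻¹}
  have hPk : ∑ p ∈ P, f p / p ≤ ∑ p ∈ {p ∈ Icc 1 ⌊z⌋₊ | p.Prime ∧ ¬ p ∣ k}, f p / p :=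
    sum_le_sum_of_subset_of_nonneg (filter_subset _ _) fun p _ _ => by positivity [hf.1 p]
  refine tsum_le_of_sum_range_le (fun n => ?_) fun N => ?_
  · split_ifs
    exacts [div_nonneg (hf.1 n) n.cast_nonneg, le_rfl]
  rw [← sum_filter]
  refine (hf.sum_div_le_exp_of_le_log_div hA1 hfp hβ0 hβ1 hz1 hz hr1 hr (P := P)
    (fun p hp => ?_) (fun n hn => ?_)).trans (exp_le_exp.2 (by linarith))
  · simp only [P, mem_filter] at hp
    exact ⟨hp.1.2.1, hJ.trans hp.2.1.le, hp.2.2⟩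
  · obtain ⟨-, hnz, hnk, hnJ, hny⟩ := mem_filter.1 hn
    exact ⟨hnz, primeFactors_subset_filter hnk hnJ hny
      (rpow_le_self_of_one_le hz1 (inv_le_one_of_one_le₀ hr1))⟩

end MultNonneg

/-- Shiu's Lemma 4 with `δ = 1 - (1 - (5/4)β) r log r / log z` (inequality (8.2)):
for `f ∈ M` and `0 < β ≤ 1/164`. -/
theorem shiu_lemma4_variant (β : ℝ) (hβ : 0 < β) (hβ' : β ≤ 1/164)
    (A1 : ℝ) (hA1 : 0 < A1) (A2 : ℝ → ℝ) :
    ∃ C : ℝ, 0 < C ∧ ∃ z0 : ℝ, ∀ z : ℝ, z0 ≤ z → ∀ x : ℝ, z ≤ x →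
      ∀ f : ℕ → ℝ, MultNonneg f → InM f A1 A2 →
      ∀ k : ℕ, 1 ≤ k →
      ∀ r : ℝ, 1 ≤ r → r ≤ Real.log z / (4 * Real.log (Real.log z)) →
      (∑' n : ℕ, if z ^ ((2 : ℝ)⁻¹) ≤ (n : ℝ) ∧ Nat.Coprime n k ∧
            JRough (Jval x β) n ∧ (∀ p ∈ n.primeFactors, (p : ℝ) ≤ z ^ r⁻¹)
          then f n / (n : ℝ) else 0)
        ≤ C * Real.exp (-(1/2) * (1 - 5/4 * β) * r * Real.log r
            + ∑ p ∈ (Finset.Icc 1 ⌊z⌋₊).filter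
                (fun p : ℕ => p.Prime ∧ ¬ p ∣ k), f p / (p : ℝ)) := by
  obtain ⟨K, hK⟩ := exists_mul_log_mul_rpow_le (c := 3 * A1) (ε := β / 8) (by positivity)
    (by positivity) hβ
  refine ⟨exp (K + 2 * A1 ^ 2 * ∑' n : ℕ, (n : ℝ) ^ (-(3 / 2 : ℝ))), exp_pos _,
    exp (exp ((4 * A1 ^ 2) ^ 2 + 1)), fun z hz x hx f hf hfM k _ r hr1 hr2 => ?_⟩
  have hz1 : 1 ≤ log (log z) := by nlinarith [le_log_log_of_exp_exp_le hz]
  have hJ : 4 * A1 ^ 2 ≤ Jval x β := by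
    have hx1 := le_log_log_of_exp_exp_le (hz.trans hx)
    exact le_Jval (by linarith) (by positivity) (by nlinarith) (by linarith)
  refine (hf.tsum_le_exp_of_le_log_div hA1.le hfM.1 hβ.le (by linarith)
    ((one_le_exp (exp_pos _).le).trans hz) hz1 hr1 hr2 hJ k).trans ?_
  rw [← exp_add]
  exact exp_le_exp.2 (by linarith [hK r hr1])
end
end
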